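/- If (λ, x) ∈ ℝ × ℝ^{n+m} is a solution of the eigenvalue system (EV), then λ ≤ 1/4. -/
import Mathlib


open Finset

/-- The eigenvalue system (EV) for the 2D-traffic dynamics: `lam` is the
additive eigenvalue and `x : ℕ → ℝ` carries the coordinates `x 1, …, x (n+m)`. -/
def EVsol (n m : ℕ) (a : ℕ → ℝ) (lam : ℝ) (x : ℕ → ℝ) : Prop :=
  (∀ i : ℕ, ((2 ≤ i ∧ i ≤ n - 1) ∨ (n + 2 ≤ i ∧ i ≤ n + m - 1)) →
      lam + x i = min (a (i - 1) + x (i - 1)) ((1 - a i) + x (i + 1))) ∧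
  lam + x n = min ((1 - (a n + a (n + m))) + x 1 + x (n + 1) - lam - x (n + m))
      (a (n - 1) + x (n - 1)) ∧
  lam + x (n + m) = min ((1 - (a n + a (n + m))) + x 1 + x (n + 1) - x n)
      (a (n + m - 1) + x (n + m - 1)) ∧
  lam + x 1 = min (a n + (x n + x (n + m)) / 2) ((1 - a 1) + x 2) ∧
  lam + x (n + 1) = min (a (n + m) + (x n + x (n + m)) / 2) ((1 - a (n + 1)) + x (n + 2))

theorem stmt0 (n m : ℕ) (hn : 2 ≤ n) (hm : 2 ≤ m) (a : ℕ → ℝ)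
    (ha : ∀ i : ℕ, 1 ≤ i → i ≤ n + m → 0 ≤ a i ∧ a i ≤ 1)
    (hprio : a n + a (n + m) ≤ 1)
    (lam : ℝ) (x : ℕ → ℝ) (hEV : EVsol n m a lam x) :
    lam ≤ 1 / 4 := by
  obtain ⟨_, h2, h3, h4, h5⟩ := hEV
  have e2 : lam + x n ≤ (1 - (a n + a (n + m))) + x 1 + x (n + 1) - lam - x (n + m) := by
    rw [h2]; exact min_le_left _ _
  have e4 : lam + x 1 ≤ a n + (x n + x (n + m)) / 2 := by
    rw [h4]; exact min_le_left _ _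
  have e5 : lam + x (n + 1) ≤ a (n + m) + (x n + x (n + m)) / 2 := by
    rw [h5]; exact min_le_left _ _
  linarith
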